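/- Let G be a finite group, (H,K) a generalized strong Shoda pair of G with strong inductive chain H = H_0 ≤ H_1 ≤ ⋯ ≤ H_n = G, and λ a linear character of H with kernel K. For 0 ≤ i ≤ n−1 put C_i = Cen_{H_{i+1}}(e_ℚ(λ^{H_i})), and for x ∈ C_i/H_i let (σ_{H_i})_x be the conjugation automorphism of ℚH_i e_ℚ(λ^{H_i}) induced by a fixed coset representative x̄ ∈ C_i of x. Then for every non-identity x ∈ C_i/H_i, the automorphism (σ_{H_i})_x is not an inner automorphism of ℚH_i e_ℚ(λ^{H_i}). -/

import Mathlib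

open scoped Classical
set_option linter.unusedSectionVars false

noncomputable section

namespace PaperGSM

variable {G : Type} [Group G] [Fintype G]

/-- `Ĥ = (1/|N|) ∑_{x ∈ N} x` in the rational group algebra. -/
def hat (N : Subgroup G) : MonoidAlgebra ℚ G :=
  (Nat.card N : ℚ)⁻¹ • ∑ x : N, MonoidAlgebra.of ℚ G (x : G)

/-- conjugation of `X` by `y`, as an equivalence of the subtype. -/
def conjEquiv (X : Subgroup G) (y : G) (h : ∀ x ∈ X, y⁻¹ * x * y ∈ X)
    (h' : ∀ x ∈ X, y * x * y⁻¹ ∈ X) : X ≃ X where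
  toFun x := ⟨y⁻¹ * x * y, h x x.2⟩
  invFun x := ⟨y * x * y⁻¹, h' x x.2⟩
  left_inv x := Subtype.ext (by group)
  right_inv x := Subtype.ext (by group)

lemma sum_conj_eq (X : Subgroup G) (y : G) (h : ∀ x ∈ X, y⁻¹ * x * y ∈ X)
    (h' : ∀ x ∈ X, y * x * y⁻¹ ∈ X) :
    ∑ x : X, MonoidAlgebra.of ℚ G ((x : G) * y)
      = ∑ x : X, MonoidAlgebra.of ℚ G (y * (x : G)) := by
  apply Fintype.sum_equiv (conjEquiv X y h h')
  intro x
  have : (x : G) * y = y * ((conjEquiv X y h h') x : G) := by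
    simp only [conjEquiv, Equiv.coe_fn_mk]
    group
  rw [this]

lemma hat_comm (X Y : Subgroup G) (h : ∀ y ∈ Y, ∀ x ∈ X, y⁻¹ * x * y ∈ X) :
    hat X * hat Y = hat Y * hat X := by
  have key : (∑ x : X, MonoidAlgebra.of ℚ G (x : G)) * (∑ y : Y, MonoidAlgebra.of ℚ G (y : G))
      = (∑ y : Y, MonoidAlgebra.of ℚ G (y : G)) * (∑ x : X, MonoidAlgebra.of ℚ G (x : G)) := by
    rw [Finset.sum_mul_sum, Finset.sum_mul_sum]
    have l : ∀ (x : X) (y : Y),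
        MonoidAlgebra.of ℚ G (x : G) * MonoidAlgebra.of ℚ G (y : G)
          = MonoidAlgebra.of ℚ G ((x : G) * (y : G)) := fun x y => (map_mul _ _ _).symm
    calc ∑ x : X, ∑ y : Y, MonoidAlgebra.of ℚ G (x : G) * MonoidAlgebra.of ℚ G (y : G)
        = ∑ y : Y, ∑ x : X, MonoidAlgebra.of ℚ G ((x : G) * (y : G)) := by
          rw [Finset.sum_comm]
          exact Finset.sum_congr rfl fun y _ => Finset.sum_congr rfl fun x _ => l x y
      _ = ∑ y : Y, ∑ x : X, MonoidAlgebra.of ℚ G ((y : G) * (x : G)) := by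
          refine Finset.sum_congr rfl fun y _ => ?_
          refine sum_conj_eq X (y : G) (fun x hx => h y y.2 x hx) (fun x hx => ?_)
          have := h (y : G)⁻¹ (Y.inv_mem y.2) x hx
          simpa using this
      _ = ∑ y : Y, ∑ x : X, MonoidAlgebra.of ℚ G (y : G) * MonoidAlgebra.of ℚ G (x : G) := by
          exact Finset.sum_congr rfl fun y _ => Finset.sum_congr rfl fun x _ => map_mul (MonoidAlgebra.of ℚ G) _ _
  unfold hat
  rw [smul_mul_smul_comm, smul_mul_smul_comm, key, mul_comm ((Nat.card X : ℚ)⁻¹)]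

instance : Fintype (Subgroup G) :=
  Fintype.ofInjective (fun H : Subgroup G => (H : Set G)) fun _ _ h => SetLike.coe_injective h

/-- `N` is a normal subgroup of `B` (both given as subgroups of the ambient group `G`). -/
def NormalIn (N B : Subgroup G) : Prop :=
  N ≤ B ∧ ∀ b ∈ B, ∀ x ∈ N, b * x * b⁻¹ ∈ N

/-- `L` is a minimal normal subgroup of `H` containing `K` properly. -/
def IsMinNormalOver (H K L : Subgroup G) : Prop :=
  NormalIn L H ∧ K < L ∧ ∀ M : Subgroup G, NormalIn M H → K < M → M ≤ L → M = L

/-- `ε(H,K)`. -/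
def eps (H K : Subgroup G) : MonoidAlgebra ℚ G :=
  if H = K then hat K
  else Finset.noncommProd (Finset.univ.filter (IsMinNormalOver H K))
    (fun L => hat K - hat L) (by
      intro L hL M hM _
      simp only [Finset.coe_filter, Set.mem_setOf_eq, Finset.mem_univ, true_and] at hL hM
      have hKL : K ≤ L := le_of_lt hL.2.1
      have hKH : K ≤ H := hKL.trans hL.1.1
      have normconj : ∀ (A : Subgroup G), NormalIn A H → ∀ y ∈ K, ∀ x ∈ A, y⁻¹ * x * y ∈ A := by
        intro A hA y hy x hx
        have := hA.2 y⁻¹ (H.inv_mem (hKH hy)) x hx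
        simpa using this
      have cKK : Commute (hat K) (hat K) := Commute.refl _
      have cKL : Commute (hat K) (hat L) :=
        (hat_comm L K (normconj L hL.1)).symm
      have cKM : Commute (hat K) (hat M) :=
        (hat_comm M K (normconj M hM.1)).symm
      have cLM : Commute (hat L) (hat M) := by
        refine hat_comm L M ?_
        intro y hy x hx
        have := hL.1.2 y⁻¹ (H.inv_mem (hM.1.1 hy)) x hx
        simpa using this
      exact (cKK.sub_right cKM).sub_left (cKL.symm.sub_right cLM))

/-- conjugation of an element of the group algebra by a group element. -/
def conjEl (g : G) (α : MonoidAlgebra ℚ G) : MonoidAlgebra ℚ G :=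
  MonoidAlgebra.of ℚ G g * α * MonoidAlgebra.of ℚ G g⁻¹

/-- `e(B,H,K)`: the sum of the distinct `B`-conjugates of `ε(H,K)`. -/
def eGHK (B H K : Subgroup G) : MonoidAlgebra ℚ G :=
  ∑ a ∈ Finset.image (fun b : B => conjEl (b : G) (eps H K)) Finset.univ, a


/-- linear extension of a character to the rational group algebra, valued in `ℂ`. -/
def extChar {Γ : Type*} [Group Γ] [Fintype Γ] (χ : Γ → ℂ) (α : MonoidAlgebra ℚ Γ) : ℂ :=
  ∑ g : Γ, (α.coeff g : ℂ) * χ g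

/-- `e` is a primitive central idempotent of the rational group algebra. -/
def IsPCI {Γ : Type*} [Group Γ] (e : MonoidAlgebra ℚ Γ) : Prop :=
  (∀ α, e * α = α * e) ∧ e * e = e ∧ e ≠ 0 ∧
    ∀ a b : MonoidAlgebra ℚ Γ, (∀ α, a * α = α * a) → (∀ α, b * α = α * b) →
      a * a = a → b * b = b → a * b = 0 → a + b = e → a = 0 ∨ b = 0

/-- `e_ℚ(χ)`: the primitive central idempotent of `ℚΓ` associated to the irreducible
character `χ`, i.e. the unique primitive central idempotent on which `χ` does not vanish. -/
def eQchar {Γ : Type*} [Group Γ] [Fintype Γ] (χ : Γ → ℂ) : MonoidAlgebra ℚ Γ :=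
  if h : ∃ e, IsPCI e ∧ extChar χ e ≠ 0 then h.choose else 0

/-- the embedding `ℚB → ℚG` for a subgroup `B` of `G`. -/
def emb (B : Subgroup G) : MonoidAlgebra ℚ B →+* MonoidAlgebra ℚ G :=
  MonoidAlgebra.mapDomainRingHom ℚ B.subtype

/-- the induced character `χ^Γ` of a character `χ` of a subgroup `N` of `Γ`. -/
def indChar {Γ : Type*} [Group Γ] [Fintype Γ] (N : Subgroup Γ) (χ : N → ℂ) : Γ → ℂ :=
  fun g => (Nat.card N : ℂ)⁻¹ * ∑ x : Γ, if h : x * g * x⁻¹ ∈ N then χ ⟨x * g * x⁻¹, h⟩ else 0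

/-- `λ` is a linear character of `H` with kernel `K`. -/
def IsLinCharKer (H K : Subgroup G) (lam : H →* ℂ) : Prop :=
  K ≤ H ∧ ∀ h : H, lam h = 1 ↔ (h : G) ∈ K

/-- given a linear character `lam` of `H ≤ G` and `H ≤ B`, the induced character `λ^B`
of the subgroup `B`. -/
def lamChar {H : Subgroup G} (lam : H →* ℂ) (B : Subgroup G) : B → ℂ :=
  indChar (H.subgroupOf B) (fun y => lam ⟨((y : B) : G), y.2⟩)

/-- `e_ℚ(λ^B)` viewed as an element of `ℚG`. -/
def eQ {H : Subgroup G} (lam : H →* ℂ) (B : Subgroup G) : MonoidAlgebra ℚ G :=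
  emb B (eQchar (lamChar lam B))

/-- `Cen_B(e)`: the centralizer of an element `e` of `ℚG` inside the subgroup `B`. -/
def cen (B : Subgroup G) (e : MonoidAlgebra ℚ G) : Subgroup G where
  carrier := {g | g ∈ B ∧ MonoidAlgebra.of ℚ G g * e = e * MonoidAlgebra.of ℚ G g}
  one_mem' := ⟨B.one_mem, by rw [map_one, one_mul, mul_one]⟩
  mul_mem' := by
    rintro a b ⟨haB, ha⟩ ⟨hbB, hb⟩
    refine ⟨B.mul_mem haB hbB, ?_⟩
    rw [map_mul, mul_assoc, hb, ← mul_assoc, ha, mul_assoc]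
  inv_mem' := by
    rintro a ⟨haB, ha⟩
    refine ⟨B.inv_mem haB, ?_⟩
    have h2 : MonoidAlgebra.of ℚ G a * MonoidAlgebra.of ℚ G a⁻¹ = 1 := by
      rw [← map_mul, mul_inv_cancel, map_one]
    have h1 : MonoidAlgebra.of ℚ G a⁻¹ * MonoidAlgebra.of ℚ G a = 1 := by
      rw [← map_mul, inv_mul_cancel, map_one]
    have hu : Commute ((Units.mk (MonoidAlgebra.of ℚ G a)
        (MonoidAlgebra.of ℚ G a⁻¹) h2 h1 : (MonoidAlgebra ℚ G)ˣ) : MonoidAlgebra ℚ G) e := ha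
    exact hu.units_inv_left

/-- the component `ℚB·e` of the group algebra, as a non-unital subring of `ℚG`. -/
def compIn (B : Subgroup G) (e : MonoidAlgebra ℚ G) : NonUnitalSubring (MonoidAlgebra ℚ G) :=
  NonUnitalSubring.closure (Set.range fun β : MonoidAlgebra ℚ B => emb B β * e)

/-- the center of the component `ℚB·e`, as a non-unital subring of `ℚG`. -/
def centerCompNUS (B : Subgroup G) (e : MonoidAlgebra ℚ G) :
    NonUnitalSubring (MonoidAlgebra ℚ G) where
  carrier := {α | α ∈ compIn B e ∧ ∀ γ ∈ compIn B e, α * γ = γ * α}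
  zero_mem' := ⟨zero_mem _, fun γ _ => by rw [zero_mul, mul_zero]⟩
  add_mem' := by
    rintro a b ⟨ha, ha'⟩ ⟨hb, hb'⟩
    exact ⟨add_mem ha hb, fun γ hγ => by rw [add_mul, mul_add, ha' γ hγ, hb' γ hγ]⟩
  neg_mem' := by
    rintro a ⟨ha, ha'⟩
    exact ⟨neg_mem ha, fun γ hγ => by rw [neg_mul, mul_neg, ha' γ hγ]⟩
  mul_mem' := by
    rintro a b ⟨ha, ha'⟩ ⟨hb, hb'⟩
    refine ⟨mul_mem ha hb, fun γ hγ => ?_⟩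
    rw [mul_assoc, hb' γ hγ, ← mul_assoc, ha' γ hγ, mul_assoc]

lemma conjEl_add (g : G) (α β : MonoidAlgebra ℚ G) :
    conjEl g (α + β) = conjEl g α + conjEl g β := by
  unfold conjEl; rw [mul_add, add_mul]

lemma conjEl_mul (g : G) (α β : MonoidAlgebra ℚ G) :
    conjEl g (α * β) = conjEl g α * conjEl g β := by
  unfold conjEl
  have h1 : MonoidAlgebra.of ℚ G g⁻¹ * MonoidAlgebra.of ℚ G g = 1 := by
    rw [← map_mul, inv_mul_cancel, map_one]
  calc MonoidAlgebra.of ℚ G g * (α * β) * MonoidAlgebra.of ℚ G g⁻¹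
      = MonoidAlgebra.of ℚ G g * α * ((MonoidAlgebra.of ℚ G g⁻¹ * MonoidAlgebra.of ℚ G g) *
        (β * MonoidAlgebra.of ℚ G g⁻¹)) := by rw [h1]; noncomm_ring
    _ = MonoidAlgebra.of ℚ G g * α * MonoidAlgebra.of ℚ G g⁻¹ *
        (MonoidAlgebra.of ℚ G g * β * MonoidAlgebra.of ℚ G g⁻¹) := by noncomm_ring

/-- the fixed points of the conjugation action of (members of) `C` on the center of the
component `ℚB·e`, as a non-unital subring of `ℚG`. -/
def fixedCenter (B : Subgroup G) (e : MonoidAlgebra ℚ G) (C : Subgroup G) :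
    NonUnitalSubring (MonoidAlgebra ℚ G) where
  carrier := {α | α ∈ centerCompNUS B e ∧ ∀ x ∈ C, conjEl x α = α}
  zero_mem' := ⟨zero_mem _, fun x _ => by unfold conjEl; rw [mul_zero, zero_mul]⟩
  add_mem' := by
    rintro a b ⟨ha, ha'⟩ ⟨hb, hb'⟩
    exact ⟨add_mem ha hb, fun x hx => by rw [conjEl_add, ha' x hx, hb' x hx]⟩
  neg_mem' := by
    rintro a ⟨ha, ha'⟩
    refine ⟨neg_mem ha, fun x hx => ?_⟩
    have : conjEl x (-a) = - conjEl x a := by unfold conjEl; rw [mul_neg, neg_mul]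
    rw [this, ha' x hx]
  mul_mem' := by
    rintro a b ⟨ha, ha'⟩ ⟨hb, hb'⟩
    exact ⟨mul_mem ha hb, fun x hx => by rw [conjEl_mul, ha' x hx, hb' x hx]⟩

/-- `(H,K)` is a Shoda pair of `G`. -/
def IsShodaPair (H K : Subgroup G) : Prop :=
  K ≤ H ∧ (∀ h ∈ H, ∀ x ∈ K, h * x * h⁻¹ ∈ K) ∧
    (∃ h ∈ H, ∀ x ∈ H, ∃ n : ℤ, (h ^ n)⁻¹ * x ∈ K) ∧
    ∀ g : G, (∀ h ∈ H, h⁻¹ * g⁻¹ * h * g ∈ H → h⁻¹ * g⁻¹ * h * g ∈ K) → g ∈ H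

/-- `c` is a strong inductive chain from `H` to `G` (with respect to the linear
character `lam` of `H`). -/
def IsStrongInductiveChain (H : Subgroup G) (lam : H →* ℂ) {n : ℕ}
    (c : Fin (n + 1) → Subgroup G) : Prop :=
  c 0 = H ∧ c (Fin.last n) = ⊤ ∧ Monotone c ∧
    ∀ i : Fin n,
      NormalIn (c i.castSucc) (cen (c i.succ) (eQ lam (c i.castSucc))) ∧
      ∀ x ∈ c i.succ, ∀ y ∈ c i.succ,
        conjEl x (eQ lam (c i.castSucc)) ≠ conjEl y (eQ lam (c i.castSucc)) →
        conjEl x (eQ lam (c i.castSucc)) * conjEl y (eQ lam (c i.castSucc)) = 0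

/-- `(H,K)` is a generalized strong Shoda pair of `G`, witnessed by the linear character
`lam` of `H` with kernel `K`. -/
def IsGSSPwith (H K : Subgroup G) (lam : H →* ℂ) : Prop :=
  IsShodaPair H K ∧ IsLinCharKer H K lam ∧
    ∃ (n : ℕ) (c : Fin (n + 1) → Subgroup G), IsStrongInductiveChain H lam c

/-- `(H,K)` is a generalized strong Shoda pair of `G`. -/
def IsGSSP (H K : Subgroup G) : Prop :=
  ∃ lam : H →* ℂ, IsGSSPwith H K lam

/-- `χ` is an irreducible (complex) character of `Γ`. -/
def IsIrrChar (Γ : Type) [Group Γ] (χ : Γ → ℂ) : Prop :=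
  ∃ V : FDRep ℂ Γ, CategoryTheory.Simple V ∧ V.character = χ

/-- `Γ` is a monomial group. -/
def IsMonomialGroup (Γ : Type) [Group Γ] [Fintype Γ] : Prop :=
  ∀ χ : Γ → ℂ, IsIrrChar Γ χ →
    ∃ (N : Subgroup Γ) (lam : N →* ℂ), χ = indChar N fun h => lam h

/-- `G` is a generalized strongly monomial group. -/
def IsGenStronglyMonomial (G : Type) [Group G] [Fintype G] : Prop :=
  ∀ χ : G → ℂ, IsIrrChar G χ →
    ∃ (H K : Subgroup G) (lam : H →* ℂ), IsGSSPwith H K lam ∧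
      χ = indChar H fun h => lam h

/-- `A` is a subnormal subgroup of `G`. -/
def Subnormal (A : Subgroup G) : Prop :=
  ∃ (n : ℕ) (c : Fin (n + 1) → Subgroup G), c 0 = A ∧ c (Fin.last n) = ⊤ ∧
    ∀ i : Fin n, NormalIn (c i.castSucc) (c i.succ)

/-- the Bass unit (Bass cyclic unit) `u_{k,m}(g)`, written in `ℚG` (it has integral
coefficients when `k^m ≡ 1 mod |g|`). -/
def bassQ (g : G) (k m : ℕ) : MonoidAlgebra ℚ G :=
  (∑ i ∈ Finset.range k, MonoidAlgebra.of ℚ G g ^ i) ^ m +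
    (((1 : ℚ) - (k : ℚ) ^ m) / (orderOf g : ℚ)) •
      ∑ i ∈ Finset.range (orderOf g), MonoidAlgebra.of ℚ G g ^ i

/-- the integral group ring `ℤB`, as a subring of `ℚG`. -/
def intRing (B : Subgroup G) : Subring (MonoidAlgebra ℚ G) :=
  Subring.closure (Set.range fun b : B => MonoidAlgebra.of ℚ G (b : G))

/-- `α` is a unit of the integral group ring `ℤB`. -/
def IsUnitOfZ (B : Subgroup G) (α : MonoidAlgebra ℚ G) : Prop :=
  α ∈ intRing B ∧ ∃ β ∈ intRing B, α * β = 1 ∧ β * α = 1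

/-- `Z(U(ℤB))`: the group of central units of `ℤB`, as a subgroup of `(ℚG)ˣ`. -/
def centralZUnits (B : Subgroup G) : Subgroup (MonoidAlgebra ℚ G)ˣ where
  carrier := {u | (u : MonoidAlgebra ℚ G) ∈ intRing B ∧
    ((u⁻¹ : (MonoidAlgebra ℚ G)ˣ) : MonoidAlgebra ℚ G) ∈ intRing B ∧
    ∀ x ∈ intRing B, (u : MonoidAlgebra ℚ G) * x = x * u}
  one_mem' := ⟨one_mem _, by rw [inv_one]; exact ⟨one_mem _, fun x _ => by rw [Units.val_one, one_mul, mul_one]⟩⟩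
  mul_mem' := by
    rintro a b ⟨ha1, ha2, ha3⟩ ⟨hb1, hb2, hb3⟩
    refine ⟨by rw [Units.val_mul]; exact mul_mem ha1 hb1, ?_, ?_⟩
    · rw [mul_inv_rev, Units.val_mul]; exact mul_mem hb2 ha2
    · intro x hx
      rw [Units.val_mul, mul_assoc, hb3 x hx, ← mul_assoc, ha3 x hx, mul_assoc]
  inv_mem' := by
    rintro a ⟨ha1, ha2, ha3⟩
    refine ⟨ha2, by rw [inv_inv]; exact ha1, fun x hx => ?_⟩
    exact Commute.units_inv_left (ha3 x hx)

/-- the element `1 - M̂ + u_{k,m}(g)·M̂` of `ℚG`. -/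
def genBassElt (M : Subgroup G) (g : G) (k m : ℕ) : MonoidAlgebra ℚ G :=
  1 - hat M + bassQ g k m * hat M

/-- `u` is a generalized Bass unit of `ℤB` based on some `g ∈ B` and the subgroup `M`:
it is the minimal positive power of `1 - M̂ + u_{k,m}(g)·M̂` which is a unit of `ℤB`. -/
def IsGenBassUnitOf (B M : Subgroup G) (u : (MonoidAlgebra ℚ G)ˣ) : Prop :=
  ∃ g ∈ B, ∃ k m nn : ℕ, 0 < k ∧ 0 < m ∧ 0 < nn ∧ k ^ m ≡ 1 [MOD orderOf g] ∧
    (u : MonoidAlgebra ℚ G) = genBassElt M g k m ^ nn ∧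
    IsUnitOfZ B (u : MonoidAlgebra ℚ G) ∧
    ∀ j : ℕ, 0 < j → j < nn → ¬ IsUnitOfZ B (genBassElt M g k m ^ j)

/-- `u` is a Bass unit of `ℤG`. -/
def IsBassUnit (u : (MonoidAlgebra ℚ G)ˣ) : Prop :=
  ∃ (g : G) (k m : ℕ), 0 < k ∧ 0 < m ∧ k ^ m ≡ 1 [MOD orderOf g] ∧
    (u : MonoidAlgebra ℚ G) = bassQ g k m

/-- a (finitely generated) group `M` has (torsion-free) rank `r` iff it contains a free
abelian subgroup of rank `r` of finite index. -/
def HasRank (M : Type*) [Group M] (r : ℕ) : Prop :=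
  ∃ f : Multiplicative (Fin r → ℤ) →* M, Function.Injective f ∧ f.range.index ≠ 0

/-- `(H,K)` realizes the primitive central idempotent `e` of `ℚG`. -/
def RealizesIdem (H K : Subgroup G) (e : MonoidAlgebra ℚ G) : Prop :=
  ∃ lam : H →* ℂ, IsLinCharKer H K lam ∧ eQ lam ⊤ = e

/-- two pairs of subgroups realize the same primitive central idempotent of `ℚG`. -/
def SameIdem (p q : Subgroup G × Subgroup G) : Prop :=
  ∃ e, RealizesIdem p.1 p.2 e ∧ RealizesIdem q.1 q.2 e

/-- `S` is a complete and irredundant set of generalized strong Shoda pairs of `G`. -/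
def IsCompleteIrredundantGSSP (S : Finset (Subgroup G × Subgroup G)) : Prop :=
  (∀ p ∈ S, IsGSSP p.1 p.2) ∧
  (∀ H K : Subgroup G, IsGSSP H K → ∃ q ∈ S, SameIdem (H, K) q) ∧
  (∀ p ∈ S, ∀ q ∈ S, SameIdem p q → p = q)

/-- the center of the component `ℚG·e` is a totally real field: every embedding of it
into `ℂ` has real image. -/
def IsTotallyRealCenter (B : Subgroup G) (e : MonoidAlgebra ℚ G) : Prop :=
  ∀ f : centerCompNUS B e →ₙ+* ℂ, f ≠ 0 → ∀ α, (f α).im = 0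

/-- `T` is a right transversal of `C` in `B`. -/
def IsRightTransversal (C B : Subgroup G) (T : Finset G) : Prop :=
  (T : Set G) ⊆ (B : Set G) ∧ ∀ b ∈ B, ∃! t, t ∈ T ∧ b * t⁻¹ ∈ C

/-- `x^g = g⁻¹ x g`. -/
def zconj (g : G) (α : MonoidAlgebra ℚ G) : MonoidAlgebra ℚ G :=
  MonoidAlgebra.of ℚ G g⁻¹ * α * MonoidAlgebra.of ℚ G g

/-- `∏_{c ∈ C} α^c`. -/
def innerProd (C : Subgroup G) (α : MonoidAlgebra ℚ G) : MonoidAlgebra ℚ G :=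
  ((Finset.univ : Finset C).toList.map fun c => zconj (c : G) α).prod

/-- `∏_{t ∈ T} α^t`. -/
def outerProd (T : Finset G) (α : MonoidAlgebra ℚ G) : MonoidAlgebra ℚ G :=
  (T.toList.map fun t => zconj t α).prod

/-- the iterated construction `z^{N}(u)` along a list of pairs (centralizer, transversal). -/
def zIterAux : List (Subgroup G × Finset G) → MonoidAlgebra ℚ G → MonoidAlgebra ℚ G
  | [], α => α
  | p :: rest, α => zIterAux rest (outerProd p.2 (innerProd p.1 α))

/-- the iterated construction `c^{N}(u)` along a list of transversals. -/
def cIterAux : List (Finset G) → MonoidAlgebra ℚ G → MonoidAlgebra ℚ G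
  | [], α => α
  | T :: rest, α => cIterAux rest (outerProd T α)



end PaperGSM

/-!
Write `B = H_i`, `e = e_ℚ(λ^B)`, let `θ : G → ℂ` be `λ^B` extended by zero and
`y = ∑ θ(g) g ∈ ℂG`. Expanding `θ` as an average of conjugates of `λ`, the coefficients of
`y · x⁻¹yx` become sums `∑_h λ(h) λ(s h⁻¹ t s⁻¹)`, which vanish for `s ∉ H` by the Shoda
condition (translate by an element of `H ∩ s⁻¹Hs` at which `λ` and its `s`-conjugate differ).
Hence `y² = |H| y`, and `y · x⁻¹yx = 0` for `x ∉ B`.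

Suppose conjugation by `x ∉ B` agrees on `ℚB e` with `α ↦ u α v`, where `u v = e`. The element
`z = y e` is central in `ℂB` and lies in `ℂB e`, so `u z v = z u v = z`: `z` commutes with `x`.
Then `|H| z = x⁻¹ (z y) x = z · x⁻¹yx = 0`, whereas the coefficient of `1` in `z` is the complex
conjugate of `λ^B(e) ≠ 0`.
-/

namespace PaperGSM

open MonoidAlgebra

lemma sum_eq_zero_of_comp_mul_right {Γ R : Type*} [Group Γ] [Fintype Γ] [Ring R]
    [NoZeroDivisors R] (f : Γ → R) (d : Γ) {c : R} (hc : c ≠ 1) (hf : ∀ g, f (g * d) = c * f g) :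
    ∑ g, f g = 0 := by
  have hsum : ∑ g, f g = c * ∑ g, f g := by
    rw [Finset.mul_sum, ← Equiv.sum_comp (Equiv.mulRight d)]
    exact Finset.sum_congr rfl fun g _ => hf g
  have : (c - 1) * ∑ g, f g = 0 := by rw [sub_mul, one_mul, ← hsum, sub_self]
  exact (mul_eq_zero.mp this).resolve_left (sub_ne_zero.mpr hc)

lemma card_subgroupOf {G : Type} [Group G] {H B : Subgroup G} (hHB : H ≤ B) :
    Nat.card (H.subgroupOf B) = Nat.card H :=
  Nat.card_congr (Subgroup.subgroupOfEquivOfLe hHB).toEquiv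

section ExtendByZero

variable {G : Type} [Group G] {H : Subgroup G} (lam : H →* ℂ)

def extZero (g : G) : ℂ :=
  if hg : g ∈ H then lam ⟨g, hg⟩ else 0

lemma extZero_of_mem {g : G} (hg : g ∈ H) : extZero lam g = lam ⟨g, hg⟩ := dif_pos hg

lemma extZero_of_not_mem {g : G} (hg : g ∉ H) : extZero lam g = 0 := dif_neg hg

lemma extZero_mul_of_mem_left {a : G} (ha : a ∈ H) (b : G) :
    extZero lam (a * b) = extZero lam a * extZero lam b := by
  by_cases hb : b ∈ H
  · rw [extZero_of_mem lam ha, extZero_of_mem lam hb, extZero_of_mem lam (H.mul_mem ha hb),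
      ← map_mul]
    rfl
  · rw [extZero_of_not_mem lam hb, mul_zero, extZero_of_not_mem lam]
    exact fun hab => hb (by simpa using H.mul_mem (H.inv_mem ha) hab)

lemma extZero_mul_of_mem_right (a : G) {b : G} (hb : b ∈ H) :
    extZero lam (a * b) = extZero lam a * extZero lam b := by
  by_cases ha : a ∈ H
  · exact extZero_mul_of_mem_left lam ha b
  · rw [extZero_of_not_mem lam ha, zero_mul, extZero_of_not_mem lam]
    exact fun hab => ha (by simpa using H.mul_mem hab (H.inv_mem hb))

lemma extZero_inv (g : G) : extZero lam g⁻¹ = (extZero lam g)⁻¹ := by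
  by_cases hg : g ∈ H
  · rw [extZero_of_mem lam hg, extZero_of_mem lam (H.inv_mem hg), ← map_inv]
    rfl
  · rw [extZero_of_not_mem lam hg, extZero_of_not_mem lam (by simpa using hg), inv_zero]

lemma extZero_one : extZero lam 1 = 1 := by
  rw [extZero_of_mem lam H.one_mem]
  exact map_one lam

lemma extZero_ne_zero {g : G} (hg : g ∈ H) : extZero lam g ≠ 0 := by
  intro h
  have := extZero_mul_of_mem_left lam hg g⁻¹
  rw [mul_inv_cancel, h, zero_mul, extZero_one] at this
  exact one_ne_zero this

lemma extZero_conj_of_mem {s : G} (hs : s ∈ H) (g : G) :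
    extZero lam (s * g * s⁻¹) = extZero lam g := by
  rw [extZero_mul_of_mem_right lam _ (H.inv_mem hs), extZero_mul_of_mem_left lam hs,
    extZero_inv, mul_right_comm, mul_inv_cancel₀ (extZero_ne_zero lam hs), one_mul]

lemma star_extZero [Finite G] (g : G) : starRingEnd ℂ (extZero lam g) = extZero lam g⁻¹ := by
  by_cases hg : g ∈ H
  · have hpow : lam ⟨g, hg⟩ ^ orderOf (⟨g, hg⟩ : H) = 1 := by
      rw [← map_pow, pow_orderOf_eq_one, map_one]
    rw [extZero_inv, extZero_of_mem lam hg,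
      Complex.inv_eq_conj (Complex.norm_eq_one_of_pow_eq_one hpow (orderOf_pos _).ne')]
  · rw [extZero_of_not_mem lam hg, extZero_of_not_mem lam (by simpa using hg), map_zero]

end ExtendByZero

section Shoda

variable {G : Type} [Group G] {H K : Subgroup G} {lam : H →* ℂ}

lemma IsShodaPair.exists_extZero_conj_ne (hSP : IsShodaPair H K) (hker : IsLinCharKer H K lam)
    {s : G} (hs : s ∉ H) :
    ∃ d ∈ H, s * d * s⁻¹ ∈ H ∧ extZero lam (s * d * s⁻¹) ≠ extZero lam d := by
  by_contra! hconj
  have hmem : s⁻¹ ∈ H := hSP.2.2.2 s⁻¹ fun h hh hcomm => by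
    rw [inv_inv] at hcomm ⊢
    have hconjH : s * h * s⁻¹ ∈ H := by
      simpa [mul_assoc] using H.mul_mem hh hcomm
    refine (hker.2 ⟨_, hcomm⟩).mp ?_
    rw [← extZero_of_mem lam hcomm, show h⁻¹ * s * h * s⁻¹ = h⁻¹ * (s * h * s⁻¹) by group,
      extZero_mul_of_mem_left lam (H.inv_mem hh), hconj h hh hconjH, extZero_inv,
      inv_mul_cancel₀ (extZero_ne_zero lam hh)]
  exact hs (by simpa using H.inv_mem hmem)

end Shoda

section TwistedSum

variable {G : Type} [Group G] [Fintype G] {H K : Subgroup G} (lam : H →* ℂ)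

def twistedSum (s t : G) : ℂ :=
  ∑ h : G, extZero lam h * extZero lam (s * h⁻¹ * t * s⁻¹)

lemma twistedSum_of_not_mem (hSP : IsShodaPair H K) (hker : IsLinCharKer H K lam) {s : G}
    (hs : s ∉ H) (t : G) : twistedSum lam s t = 0 := by
  obtain ⟨d, hd, hsd, hne⟩ := hSP.exists_extZero_conj_ne hker hs
  refine sum_eq_zero_of_comp_mul_right _ d
    (c := extZero lam d * (extZero lam (s * d * s⁻¹))⁻¹) ?_ fun h => ?_
  · rw [Ne, mul_inv_eq_one₀ (extZero_ne_zero lam hsd)]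
    exact hne.symm
  · rw [extZero_mul_of_mem_right lam h hd,
      show s * (h * d)⁻¹ * t * s⁻¹ = (s * d * s⁻¹)⁻¹ * (s * h⁻¹ * t * s⁻¹) by group,
      extZero_mul_of_mem_left lam (H.inv_mem hsd), extZero_inv]
    ring

lemma twistedSum_of_mem {s : G} (hs : s ∈ H) (t : G) :
    twistedSum lam s t = Nat.card H * extZero lam t := by
  have hterm : ∀ h : G, extZero lam h * extZero lam (s * h⁻¹ * t * s⁻¹)
      = if h ∈ H then extZero lam t else 0 := by
    intro h
    split_ifs with hh
    · rw [show s * h⁻¹ * t * s⁻¹ = s * (h⁻¹ * t) * s⁻¹ by group, extZero_conj_of_mem lam hs,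
        extZero_mul_of_mem_left lam (H.inv_mem hh), extZero_inv,
        mul_inv_cancel_left₀ (extZero_ne_zero lam hh)]
    · rw [extZero_of_not_mem lam hh, zero_mul]
  rw [twistedSum, Finset.sum_congr rfl fun h _ => hterm h, Finset.sum_ite, Finset.sum_const,
    Finset.sum_const_zero, add_zero, nsmul_eq_mul, Nat.card_eq_fintype_card,
    Fintype.card_subtype]

end TwistedSum

section InducedChar

variable {G : Type} [Group G] [Fintype G] {H K : Subgroup G} (lam : H →* ℂ) (B : Subgroup G)

def inducedChar (g : G) : ℂ :=
  (Nat.card H : ℂ)⁻¹ * ∑ z : B, extZero lam (z * g * (z : G)⁻¹)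

variable {B}

lemma lamChar_eq_inducedChar (hHB : H ≤ B) (b : B) : lamChar lam B b = inducedChar lam B b := by
  rw [lamChar, indChar, inducedChar, card_subgroupOf hHB]
  rfl

lemma inducedChar_of_not_mem (hHB : H ≤ B) {g : G} (hg : g ∉ B) : inducedChar lam B g = 0 := by
  refine mul_eq_zero_of_right _ (Finset.sum_eq_zero fun z _ => extZero_of_not_mem lam fun h => ?_)
  exact hg (by simpa [mul_assoc] using B.mul_mem (B.mul_mem (B.inv_mem z.2) (hHB h)) z.2)

lemma inducedChar_conj {b : G} (hb : b ∈ B) (g : G) :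
    inducedChar lam B (b * g * b⁻¹) = inducedChar lam B g := by
  rw [inducedChar, inducedChar, ← Equiv.sum_comp (Equiv.mulRight (⟨b, hb⟩ : B))
    fun z : B => extZero lam (z * g * (z : G)⁻¹)]
  congr 2 with z
  simp only [Equiv.coe_mulRight, Subgroup.coe_mul]
  group

lemma star_inducedChar (g : G) :
    starRingEnd ℂ (inducedChar lam B g) = inducedChar lam B g⁻¹ := by
  simp only [inducedChar, map_mul, map_inv₀, map_natCast, map_sum, star_extZero, mul_inv_rev,
    inv_inv, mul_assoc]

lemma inducedChar_one_ne_zero : inducedChar lam B 1 ≠ 0 := by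
  simp only [inducedChar, mul_one, mul_inv_cancel, extZero_one, Finset.sum_const,
    Finset.card_univ, nsmul_eq_mul]
  exact mul_ne_zero (inv_ne_zero (Nat.cast_ne_zero.mpr Nat.card_pos.ne'))
    (Nat.cast_ne_zero.mpr Fintype.card_ne_zero)

lemma sum_inducedChar_mul_conj (x g : G) :
    ∑ a : G, inducedChar lam B a * inducedChar lam B (x * a⁻¹ * g * x⁻¹)
      = (Nat.card H : ℂ)⁻¹ * (Nat.card H : ℂ)⁻¹ *
        ∑ z : B, ∑ w : B, twistedSum lam (w * x * (z : G)⁻¹) (z * g * (z : G)⁻¹) := by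
  have hexpand : ∀ a : G, inducedChar lam B a * inducedChar lam B (x * a⁻¹ * g * x⁻¹)
      = (Nat.card H : ℂ)⁻¹ * (Nat.card H : ℂ)⁻¹ * ∑ z : B, ∑ w : B,
        extZero lam (z * a * (z : G)⁻¹) * extZero lam (w * (x * a⁻¹ * g * x⁻¹) * (w : G)⁻¹) :=
    fun a => by rw [inducedChar, inducedChar, mul_mul_mul_comm, Finset.sum_mul_sum]
  rw [Finset.sum_congr rfl fun a _ => hexpand a, ← Finset.mul_sum, Finset.sum_comm]
  refine congrArg _ (Finset.sum_congr rfl fun z _ => ?_)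
  rw [Finset.sum_comm]
  refine Finset.sum_congr rfl fun w _ => ?_
  refine Fintype.sum_equiv (MulAut.conj (z : G)).toEquiv _ _ fun a => ?_
  simp only [MulEquiv.toEquiv_eq_coe, MulEquiv.coe_toEquiv, MulAut.conj_apply]
  congr 2
  group

lemma sum_inducedChar_mul_conj_of_not_mem (hSP : IsShodaPair H K)
    (hker : IsLinCharKer H K lam) (hHB : H ≤ B) {x : G} (hx : x ∉ B) (g : G) :
    ∑ a : G, inducedChar lam B a * inducedChar lam B (x * a⁻¹ * g * x⁻¹) = 0 := by
  rw [sum_inducedChar_mul_conj]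
  refine mul_eq_zero_of_right _ (Finset.sum_eq_zero fun z _ => Finset.sum_eq_zero fun w _ =>
    twistedSum_of_not_mem lam hSP hker (fun h => hx ?_) _)
  simpa [mul_assoc] using B.mul_mem (B.mul_mem (B.inv_mem w.2) (hHB h)) z.2

lemma sum_inducedChar_mul_inv_mul (hSP : IsShodaPair H K)
    (hker : IsLinCharKer H K lam) (hHB : H ≤ B) (g : G) :
    ∑ a : G, inducedChar lam B a * inducedChar lam B (a⁻¹ * g)
      = Nat.card H * inducedChar lam B g := by
  have hcount : ∀ z : B, ∑ w : B, twistedSum lam (w * (z : G)⁻¹) (z * g * (z : G)⁻¹)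
      = Nat.card H * (Nat.card H * extZero lam (z * g * (z : G)⁻¹)) := by
    intro z
    rw [Fintype.sum_equiv (Equiv.mulRight z⁻¹) _
      (fun w : B => if (w : G) ∈ H then Nat.card H * extZero lam (z * g * (z : G)⁻¹) else 0)
      fun w => ?_]
    · rw [Finset.sum_ite, Finset.sum_const, Finset.sum_const_zero, add_zero, nsmul_eq_mul,
        ← Fintype.card_subtype, ← Nat.card_eq_fintype_card]
      exact congrArg (fun n : ℕ => (n : ℂ) * _) (card_subgroupOf hHB)
    · by_cases hw : ((Equiv.mulRight z⁻¹ w : B) : G) ∈ H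
      · rw [if_pos hw]
        exact twistedSum_of_mem lam hw _
      · rw [if_neg hw]
        exact twistedSum_of_not_mem lam hSP hker hw _
  have h := sum_inducedChar_mul_conj lam (B := B) 1 g
  simp only [one_mul, inv_one, mul_one] at h
  rw [h, Finset.sum_congr rfl fun z _ => hcount z, ← Finset.mul_sum, ← Finset.mul_sum,
    inducedChar]
  have hN : (Nat.card H : ℂ) ≠ 0 := Nat.cast_ne_zero.mpr Nat.card_pos.ne'
  field_simp

end InducedChar

section GroupAlgebra

variable {G : Type} [Group G]

def toComplex : MonoidAlgebra ℚ G →+* MonoidAlgebra ℂ G :=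
  mapRingHom G (Rat.castHom ℂ)

lemma toComplex_of (g : G) : toComplex (of ℚ G g) = of ℂ G g := by
  rw [toComplex, of_apply, of_apply, mapRingHom_single, map_one]

lemma toComplex_conjEl (x : G) (α : MonoidAlgebra ℚ G) :
    toComplex (conjEl x α) = of ℂ G x * toComplex α * of ℂ G x⁻¹ := by
  rw [conjEl, map_mul, map_mul, toComplex_of, toComplex_of]

lemma emb_single (B : Subgroup G) (b : B) (r : ℚ) : emb B (single b r) = single (b : G) r := by
  rw [emb, mapDomainRingHom_apply, mapDomain_single]
  rfl

lemma of_mul_mem_compIn {B : Subgroup G} {b : G} (hb : b ∈ B) (e : MonoidAlgebra ℚ G) :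
    of ℚ G b * e ∈ compIn B e :=
  NonUnitalSubring.subset_closure
    ⟨of ℚ B ⟨b, hb⟩, show emb B _ * e = _ by rw [of_apply, emb_single, of_apply]⟩

lemma mem_range_emb_of_mem_compIn {B : Subgroup G} (e : MonoidAlgebra ℚ B)
    {α : MonoidAlgebra ℚ G} (hα : α ∈ compIn B (emb B e)) : α ∈ (emb B).range := by
  refine (NonUnitalSubring.closure_le (t := (emb B).range.toNonUnitalSubring)).mpr ?_ hα
  rintro _ ⟨β, rfl⟩
  exact ⟨β * e, map_mul _ _ _⟩

lemma mul_eq_self_of_mem_compIn {B : Subgroup G} {e : MonoidAlgebra ℚ G} (he : IsIdempotentElem e)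
    {α : MonoidAlgebra ℚ G} (hα : α ∈ compIn B e) : α * e = α := by
  induction hα using NonUnitalSubring.closure_induction with
  | mem _ h =>
    obtain ⟨β, rfl⟩ := h
    rw [mul_assoc, he.eq]
  | zero => exact zero_mul e
  | add _ _ _ _ h₁ h₂ => rw [add_mul, h₁, h₂]
  | neg _ _ h => rw [neg_mul, h]
  | mul _ _ _ _ _ h₂ => rw [mul_assoc, h₂]

lemma commute_toComplex_emb {B : Subgroup G} {y : MonoidAlgebra ℂ G}
    (hy : ∀ b ∈ B, Commute y (of ℂ G b)) (β : MonoidAlgebra ℚ B) :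
    Commute y (toComplex (emb B β)) := by
  induction β using MonoidAlgebra.induction_linear with
  | zero => rw [map_zero, map_zero]; exact Commute.zero_right y
  | add β γ hβ hγ => rw [map_add, map_add]; exact hβ.add_right hγ
  | single b r =>
    rw [emb_single, toComplex, mapRingHom_single, ← mul_one (Rat.castHom ℂ r), ← smul_eq_mul,
      ← smul_single, ← of_apply]
    exact (hy b b.2).smul_right _

lemma sum_coeff_emb_mul [Fintype G] (B : Subgroup G) (β : MonoidAlgebra ℚ B) (F : G → ℂ) :
    ∑ g : G, ((emb B β).coeff g : ℂ) * F g = ∑ b : B, (β.coeff b : ℂ) * F b := by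
  induction β using MonoidAlgebra.induction_linear with
  | zero => simp
  | add β γ hβ hγ => simp only [map_add, coeff_add, Finsupp.add_apply, Rat.cast_add, add_mul,
      Finset.sum_add_distrib, hβ, hγ]
  | single b r => simp [emb_single, Finsupp.single_apply, apply_ite (Rat.cast : ℚ → ℂ), ite_mul]

lemma commute_of_conjEl_eq_inner [Fintype G] {B : Subgroup G} {e : MonoidAlgebra ℚ B}
    (he : IsIdempotentElem e) {x : G} {u v : MonoidAlgebra ℚ G} (hu : u ∈ compIn B (emb B e))
    (huv : u * v = emb B e) (hinner : ∀ α ∈ compIn B (emb B e), conjEl x α = u * α * v)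
    {c : G → ℂ} (hc : ∀ g ∉ B, c g = 0) (hy : ∀ b ∈ B, Commute (∑ g, c g • of ℂ G g) (of ℂ G b)) :
    Commute (of ℂ G x) ((∑ g, c g • of ℂ G g) * toComplex (emb B e)) := by
  set y := ∑ g, c g • of ℂ G g
  have hsum : y * toComplex (emb B e) = ∑ g, c g • toComplex (of ℚ G g * emb B e) := by
    rw [Finset.sum_mul]
    exact Finset.sum_congr rfl fun g _ => by rw [smul_mul_assoc, map_mul, toComplex_of]
  have hconj : of ℂ G x * (y * toComplex (emb B e)) * of ℂ G x⁻¹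
      = toComplex u * (y * toComplex (emb B e)) * toComplex v := by
    simp only [hsum, Finset.mul_sum, Finset.sum_mul, mul_smul_comm, smul_mul_assoc]
    refine Finset.sum_congr rfl fun g _ => ?_
    by_cases hg : g ∈ B
    · rw [← toComplex_conjEl, hinner _ (of_mul_mem_compIn hg _), map_mul, map_mul]
    · rw [hc g hg, zero_smul, zero_smul]
  have hfix : toComplex u * (y * toComplex (emb B e)) * toComplex v = y * toComplex (emb B e) := by
    have hue : u * emb B e = u :=
      mul_eq_self_of_mem_compIn (by rw [IsIdempotentElem, ← map_mul, he.eq]) hu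
    obtain ⟨β, rfl⟩ := mem_range_emb_of_mem_compIn e hu
    rw [← mul_assoc, ← (commute_toComplex_emb hy β).eq, mul_assoc y, mul_assoc y, ← map_mul,
      ← map_mul, hue, huv]
  calc of ℂ G x * (y * toComplex (emb B e))
      = of ℂ G x * (y * toComplex (emb B e)) * of ℂ G x⁻¹ * of ℂ G x := by
        rw [mul_assoc _ (of ℂ G x⁻¹), ← map_mul, inv_mul_cancel, map_one, mul_one]
    _ = y * toComplex (emb B e) * of ℂ G x := by rw [hconj, hfix]

end GroupAlgebra

section InducedCharElement

variable {G : Type} [Group G] [Fintype G] {H K : Subgroup G} (lam : H →* ℂ) (B : Subgroup G)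

def charElt : MonoidAlgebra ℂ G :=
  ∑ g, inducedChar lam B g • of ℂ G g

variable {B}

lemma commute_charElt_of {b : G} (hb : b ∈ B) : Commute (charElt lam B) (of ℂ G b) := by
  change charElt lam B * of ℂ G b = of ℂ G b * charElt lam B
  simp only [charElt, Finset.sum_mul, Finset.mul_sum, smul_mul_assoc, mul_smul_comm, ← map_mul]
  refine Fintype.sum_equiv (MulAut.conj b⁻¹).toEquiv _ _ fun g => ?_
  have := inducedChar_conj lam (B.inv_mem hb) g
  simp only [inv_inv] at this
  simp only [MulEquiv.toEquiv_eq_coe, MulEquiv.coe_toEquiv, MulAut.conj_apply, inv_inv, this]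
  congr 2
  group

lemma conj_charElt (x : G) :
    of ℂ G x⁻¹ * charElt lam B * of ℂ G x = ∑ c, inducedChar lam B c • of ℂ G (x⁻¹ * c * x) := by
  simp only [charElt, Finset.mul_sum, Finset.sum_mul, mul_smul_comm, smul_mul_assoc, ← map_mul]

lemma charElt_mul_conj (x : G) :
    charElt lam B * (of ℂ G x⁻¹ * charElt lam B * of ℂ G x)
      = ∑ g, (∑ a, inducedChar lam B a * inducedChar lam B (x * a⁻¹ * g * x⁻¹)) • of ℂ G g := by
  rw [conj_charElt, charElt, Finset.sum_mul_sum]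
  simp only [Finset.sum_smul]
  conv_rhs => rw [Finset.sum_comm]
  refine Finset.sum_congr rfl fun a _ => Fintype.sum_equiv
    ((Equiv.mulLeft (a * x⁻¹)).trans (Equiv.mulRight x)) _ _ fun c => ?_
  simp only [Equiv.trans_apply, Equiv.coe_mulLeft, Equiv.coe_mulRight, smul_mul_smul_comm,
    ← map_mul]
  rw [show x * a⁻¹ * (a * x⁻¹ * c * x) * x⁻¹ = c by group, ← mul_assoc, ← mul_assoc]

lemma charElt_mul_charElt (hSP : IsShodaPair H K) (hker : IsLinCharKer H K lam) (hHB : H ≤ B) :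
    charElt lam B * charElt lam B = (Nat.card H : ℂ) • charElt lam B := by
  have h := charElt_mul_conj lam (B := B) 1
  simp only [inv_one, map_one, one_mul, mul_one] at h
  rw [h]
  simp only [sum_inducedChar_mul_inv_mul lam hSP hker hHB, charElt, Finset.smul_sum,
    smul_smul]

lemma charElt_mul_conj_eq_zero (hSP : IsShodaPair H K) (hker : IsLinCharKer H K lam) (hHB : H ≤ B)
    {x : G} (hx : x ∉ B) : charElt lam B * (of ℂ G x⁻¹ * charElt lam B * of ℂ G x) = 0 := by
  simp only [charElt_mul_conj, sum_inducedChar_mul_conj_of_not_mem lam hSP hker hHB hx,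
    zero_smul, Finset.sum_const_zero]

lemma charElt_mul_eq_zero_of_commute (hSP : IsShodaPair H K) (hker : IsLinCharKer H K lam)
    (hHB : H ≤ B) {x : G} (hx : x ∉ B) {w : MonoidAlgebra ℂ G} (hwy : Commute (charElt lam B) w)
    (hxw : Commute (of ℂ G x) (charElt lam B * w)) : charElt lam B * w = 0 := by
  set y := charElt lam B
  have hfix : of ℂ G x⁻¹ * (y * w) * of ℂ G x = y * w := by
    rw [mul_assoc, ← hxw.eq, ← mul_assoc, ← map_mul, inv_mul_cancel, map_one, one_mul]
  have hsplit : of ℂ G x⁻¹ * (y * w * y) * of ℂ G x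
      = (of ℂ G x⁻¹ * (y * w) * of ℂ G x) * (of ℂ G x⁻¹ * y * of ℂ G x) := by
    simp only [mul_assoc]
    rw [← mul_assoc (of ℂ G x), ← map_mul, mul_inv_cancel, map_one, one_mul]
  have hyy : y * w * y = (Nat.card H : ℂ) • (y * w) := by
    rw [mul_assoc, ← hwy.eq, ← mul_assoc, charElt_mul_charElt lam hSP hker hHB, smul_mul_assoc]
  have hN : (Nat.card H : ℂ) ≠ 0 := Nat.cast_ne_zero.mpr Nat.card_pos.ne'
  refine (smul_eq_zero.mp ?_).resolve_left hN
  calc (Nat.card H : ℂ) • (y * w) = of ℂ G x⁻¹ * ((Nat.card H : ℂ) • (y * w)) * of ℂ G x := by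
        rw [mul_smul_comm, smul_mul_assoc, hfix]
    _ = (of ℂ G x⁻¹ * (y * w) * of ℂ G x) * (of ℂ G x⁻¹ * y * of ℂ G x) := by rw [← hyy, hsplit]
    _ = w * (y * (of ℂ G x⁻¹ * y * of ℂ G x)) := by rw [hfix, hwy.eq, mul_assoc]
    _ = 0 := by rw [charElt_mul_conj_eq_zero lam hSP hker hHB hx, mul_zero]

lemma coeff_one_charElt_mul_toComplex_emb (hHB : H ≤ B) (β : MonoidAlgebra ℚ B) :
    (charElt lam B * toComplex (emb B β)).coeff 1 = starRingEnd ℂ (extChar (lamChar lam B) β) := by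
  simp only [charElt, Finset.sum_mul, smul_mul_assoc, coeff_sum, Finset.sum_apply',
    coeff_smul_apply, of_apply, coeff_single_mul_apply, one_mul, mul_one, toComplex, coeff_mapRingHom,
    Rat.coe_castHom, smul_eq_mul, extChar, map_sum, map_mul, map_ratCast]
  rw [← Equiv.sum_comp (Equiv.inv G)]
  simp only [Equiv.inv_apply, inv_inv, lamChar_eq_inducedChar lam hHB, star_inducedChar]
  rw [← sum_coeff_emb_mul B β fun g => inducedChar lam B g⁻¹]
  exact Finset.sum_congr rfl fun g _ => mul_comm _ _

end InducedCharElement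

section PrimitiveCentralIdempotent

lemma range_mulLeft_lt_range_mulLeft_add {R A : Type*} [CommSemiring R] [Semiring A]
    [Algebra R A] {a b : A} (ha : IsIdempotentElem a) (hb : IsIdempotentElem b) (hab : a * b = 0)
    (hba : b * a = 0) (hb0 : b ≠ 0) :
    LinearMap.range (LinearMap.mulLeft R a) < LinearMap.range (LinearMap.mulLeft R (a + b)) := by
  refine lt_of_le_of_ne ?_ fun h => hb0 ?_
  · rintro _ ⟨δ, rfl⟩
    exact ⟨a * δ, by simp only [LinearMap.mulLeft_apply, ← mul_assoc, add_mul, ha.eq, hba,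
      add_zero]⟩
  · obtain ⟨δ, hδ⟩ : b ∈ LinearMap.range (LinearMap.mulLeft R a) :=
      h ▸ ⟨b, by rw [LinearMap.mulLeft_apply, add_mul, hab, hb.eq, zero_add]⟩
    rw [LinearMap.mulLeft_apply] at hδ
    calc b = b * (a * δ) := by rw [hδ, hb.eq]
      _ = 0 := by rw [← mul_assoc, hba, zero_mul]

variable {Γ : Type} [Group Γ] [Fintype Γ]

lemma extChar_add (χ : Γ → ℂ) (α β : MonoidAlgebra ℚ Γ) :
    extChar χ (α + β) = extChar χ α + extChar χ β := by
  simp only [extChar, coeff_add, Finsupp.add_apply, Rat.cast_add, add_mul, Finset.sum_add_distrib]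

lemma extChar_zero (χ : Γ → ℂ) : extChar χ 0 = 0 := by
  simp [extChar]

lemma extChar_one (χ : Γ → ℂ) : extChar χ 1 = χ 1 := by
  simp [extChar, one_def, Finsupp.single_apply, apply_ite (Rat.cast : ℚ → ℂ), ite_mul]

lemma exists_isPCI_of_extChar_ne_zero (χ : Γ → ℂ) {f : MonoidAlgebra ℚ Γ}
    (hf : ∀ α, f * α = α * f) (hff : f * f = f) (hχ : extChar χ f ≠ 0) :
    ∃ e, IsPCI e ∧ extChar χ e ≠ 0 := by
  induction hn : Module.finrank ℚ (LinearMap.range (LinearMap.mulLeft ℚ f))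
    using Nat.strong_induction_on generalizing f with
  | _ n ih =>
  by_cases hprim : ∀ a b : MonoidAlgebra ℚ Γ, (∀ α, a * α = α * a) → (∀ α, b * α = α * b) →
      a * a = a → b * b = b → a * b = 0 → a + b = f → a = 0 ∨ b = 0
  · exact ⟨f, ⟨hf, hff, fun h => hχ (by rw [h, extChar_zero]), hprim⟩, hχ⟩
  push Not at hprim
  obtain ⟨a, b, ha, hb, haa, hbb, hab, rfl, ha0, hb0⟩ := hprim
  have hba : b * a = 0 := by rw [← ha b, hab]
  rw [extChar_add] at hχ
  by_cases hχa : extChar χ a = 0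
  · refine ih _ (hn ▸ Submodule.finrank_lt_finrank_of_lt ?_) hb hbb
      (by rwa [hχa, zero_add] at hχ) rfl
    rw [add_comm]
    exact range_mulLeft_lt_range_mulLeft_add hbb haa hba hab ha0
  · exact ih _ (hn ▸ Submodule.finrank_lt_finrank_of_lt
      (range_mulLeft_lt_range_mulLeft_add haa hbb hab hba hb0)) ha haa hχa rfl

lemma eQchar_spec (χ : Γ → ℂ) (h1 : χ 1 ≠ 0) :
    IsPCI (eQchar χ) ∧ extChar χ (eQchar χ) ≠ 0 := by
  have hex := exists_isPCI_of_extChar_ne_zero χ (f := 1) (fun α => by rw [one_mul, mul_one])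
    (one_mul 1) (by rwa [extChar_one])
  rw [eQchar, dif_pos hex]
  exact hex.choose_spec

end PrimitiveCentralIdempotent

/-- For a generalized strong Shoda pair `(H,K)` of `G` with strong inductive
chain as above, the conjugation automorphism `(σ_{H_i})_x` of `ℚH_i e_ℚ(λ^{H_i})` induced by a
representative `x̄ ∈ C_i` of a non-identity `x ∈ C_i/H_i` is not an inner automorphism. -/
theorem conj_aut_not_inner
    (G : Type) [Group G] [Fintype G] (H K : Subgroup G) (lam : H →* ℂ)
    (hSP : IsShodaPair H K) (hker : IsLinCharKer H K lam)
    {n : ℕ} (c : Fin (n + 1) → Subgroup G) (hchain : IsStrongInductiveChain H lam c)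
    (i : Fin n) :
    ∀ x : G, x ∈ cen (c i.succ) (eQ lam (c i.castSucc)) → x ∉ c i.castSucc →
      ¬ ∃ u v : MonoidAlgebra ℚ G,
          u ∈ compIn (c i.castSucc) (eQ lam (c i.castSucc)) ∧
          v ∈ compIn (c i.castSucc) (eQ lam (c i.castSucc)) ∧
          u * v = eQ lam (c i.castSucc) ∧ v * u = eQ lam (c i.castSucc) ∧
          ∀ α ∈ compIn (c i.castSucc) (eQ lam (c i.castSucc)),
            conjEl x α = u * α * v := by
  rintro x - hxB ⟨u, v, hu, -, huv, -, hinner⟩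
  have hHB : H ≤ c i.castSucc := hchain.1 ▸ hchain.2.2.1 (Fin.zero_le _)
  obtain ⟨⟨-, hidem, -⟩, hχ⟩ := eQchar_spec (lamChar lam (c i.castSucc))
    ((lamChar_eq_inducedChar lam hHB 1).trans_ne (inducedChar_one_ne_zero lam))
  have hfix := commute_of_conjEl_eq_inner hidem hu huv hinner
    (fun _ => inducedChar_of_not_mem lam hHB) fun _ => commute_charElt_of lam
  have hzero := charElt_mul_eq_zero_of_commute lam hSP hker hHB hxB
    (commute_toComplex_emb (fun _ => commute_charElt_of lam) _) hfix
  apply hχ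
  simpa [hzero] using (coeff_one_charElt_mul_toComplex_emb lam hHB (eQchar (lamChar lam _))).symm

end PaperGSM
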